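/- arXiv:1507.08407 — 2 statements merged into one kernel-verified Lean document; each statement's English description precedes it below -/
import Mathlib

section
/- Let A be a Fréchet-dense subalgebra of C^∞(M) for a compact smooth manifold M. Then the span of elements f·dg with f, g ∈ A is dense in the space Ω¹(C^∞(M)) of smooth 1-forms with respect to its natural Fréchet topology. -/
/-!
The map `(f, g) ↦ f • d g` is continuous and `A × A` is dense, so every `f • d g` lies in the
closure of `Ω¹(A)`. That closure is a closed submodule, hence it contains the span of all
`f • d g`, which is dense.
-/

open Set Submodule

theorem ContinuousConstSMul.of_isScalarTower {M N α : Type*} [Monoid N] [SMul M N]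
    [MulAction N α] [SMul M α] [IsScalarTower M N α] [TopologicalSpace α]
    [ContinuousConstSMul N α] : ContinuousConstSMul M α where
  continuous_const_smul c := by
    simpa only [smul_one_smul] using continuous_const_smul (T := α) (c • (1 : N))

section DenseSpan

variable {R M X : Type*} [Semiring R] [AddCommMonoid M] [Module R M] [TopologicalSpace M]
  [ContinuousAdd M] [ContinuousConstSMul R M] [TopologicalSpace X] {φ : X → M} {s : Set X}

theorem Submodule.span_range_le_topologicalClosure_span_image (hφ : Continuous φ)
    (hs : Dense s) : span R (range φ) ≤ (span R (φ '' s)).topologicalClosure :=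
  span_le.2 <| (hφ.range_subset_closure_image_dense hs).trans (closure_mono subset_span)

theorem Dense.span_image_of_dense_span_range (hφ : Continuous φ) (hs : Dense s)
    (hrange : Dense (span R (range φ) : Set M)) : Dense (span R (φ '' s) : Set M) :=
  (hrange.mono (span_range_le_topologicalClosure_span_image hφ hs)).of_closure

end DenseSpan

theorem stmt0_general {Cinf : Type*} [CommRing Cinf] [Algebra ℂ Cinf]
    [TopologicalSpace Cinf]
    {Ω : Type*} [AddCommGroup Ω] [Module ℂ Ω] [Module Cinf Ω]
    [IsScalarTower ℂ Cinf Ω] [TopologicalSpace Ω] [IsTopologicalAddGroup Ω]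
    (hsmul : Continuous fun p : Cinf × Ω => p.1 • p.2)
    (d : Cinf →ₗ[ℂ] Ω) (hd : Continuous d)
    (hgen : Dense (↑(Submodule.span ℂ {ω : Ω | ∃ f g : Cinf, ω = f • d g}) : Set Ω))
    (A : Subalgebra ℂ Cinf) (hA : Dense (A : Set Cinf)) :
    Dense (↑(Submodule.span ℂ
      {ω : Ω | ∃ f g : Cinf, f ∈ A ∧ g ∈ A ∧ ω = f • d g}) : Set Ω) := by
  have : ContinuousSMul Cinf Ω := ⟨hsmul⟩
  have : ContinuousConstSMul ℂ Ω := .of_isScalarTower (N := Cinf)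
  let φ : Cinf × Cinf → Ω := fun p => p.1 • d p.2
  have hφ : Continuous φ := continuous_fst.smul (hd.comp continuous_snd)
  have hrange : range φ = {ω : Ω | ∃ f g : Cinf, ω = f • d g} := by
    ext ω; simp [φ, eq_comm]
  have himage : φ '' ((A : Set Cinf) ×ˢ (A : Set Cinf)) =
      {ω : Ω | ∃ f g : Cinf, f ∈ A ∧ g ∈ A ∧ ω = f • d g} := by
    ext ω; simp [φ, eq_comm, and_assoc]
  rw [← hrange] at hgen
  rw [← himage]
  exact Dense.span_image_of_dense_span_range hφ (hA.prod hA) hgen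

/-- Lemma 3.8: Let `Cinf` stand for the Fréchet *-algebra
`C^∞(M)` of a compact smooth manifold, a topological algebra, and `Ω` for the
topological `C^∞(M)`-module `Ω¹(C^∞(M))` of smooth 1-forms, with continuous
module multiplication and continuous exterior derivative `d`, such that
`Ω¹(C^∞(M)) = span{f dg : f, g ∈ C^∞(M)}` is dense.  If `A` is a Fréchet-dense
subalgebra of `C^∞(M)`, then `Ω¹(A) = span{f dg : f, g ∈ A}` is dense in
`Ω¹(C^∞(M))`. -/
theorem stmt0 {Cinf : Type*} [CommRing Cinf] [Algebra ℂ Cinf]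
    [TopologicalSpace Cinf] [IsTopologicalRing Cinf]
    {Ω : Type*} [AddCommGroup Ω] [Module ℂ Ω] [Module Cinf Ω]
    [IsScalarTower ℂ Cinf Ω] [TopologicalSpace Ω] [IsTopologicalAddGroup Ω]
    (hsmul : Continuous fun p : Cinf × Ω => p.1 • p.2)
    (d : Cinf →ₗ[ℂ] Ω) (hd : Continuous d)
    (hgen : Dense (↑(Submodule.span ℂ {ω : Ω | ∃ f g : Cinf, ω = f • d g}) : Set Ω))
    (A : Subalgebra ℂ Cinf) (hA : Dense (A : Set Cinf)) :
    Dense (↑(Submodule.span ℂ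
      {ω : Ω | ∃ f g : Cinf, f ∈ A ∧ g ∈ A ∧ ω = f • d g}) : Set Ω) :=
  stmt0_general hsmul d hd hgen A hA
end

section
/- Let U ⊆ ℝⁿ be open with compact closure K, and let F : U → E be a continuous function into a Banach space E such that for every bounded linear functional ω on E, the scalar function ω ∘ F is C² on U with second partial derivatives bounded on K. Then for each point x⁰ ∈ U and each coordinate direction i, the difference quotients (F(x⁰ + h eᵢ) − F(x⁰))/h form a Cauchy family in E as h → 0, so the partial derivative ∂F/∂xᵢ(x⁰) exists in the norm topology of E. -/
/-!
Every scalar slice `ω ∘ F` has a second-order Taylor expansion at `x₀` along `eᵢ`, so its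
difference quotients `q(h)` satisfy `|ω (q h - q k)| ≤ C_ω (|h| + |k|)`. Read through the
embedding of `E` into its bidual, the vectors `(q h - q k) / (|h| + |k|)` form a pointwise
bounded family of functionals on the Banach space `E*`; by uniform boundedness
`‖q h - q k‖ ≤ M (|h| + |k|)`, so `q` is Cauchy as `h → 0` and converges since `E` is complete.
-/

open Filter Topology

section Taylor

variable {E F : Type*} [NormedAddCommGroup E] [NormedSpace ℝ E] [NormedAddCommGroup F]
  [NormedSpace ℝ F] {f : E → F} {U : Set E} {C : ℝ}

theorem norm_fderivWithin_sub_le_of_norm_iteratedFDerivWithin_two_le (hU : UniqueDiffOn ℝ U)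
    (hf : ContDiffOn ℝ 2 f U) {s : Set E} (hs : Convex ℝ s) (hsU : s ⊆ U)
    (hC : ∀ z ∈ s, ‖iteratedFDerivWithin ℝ 2 f U z‖ ≤ C) {x y : E} (hx : x ∈ s) (hy : y ∈ s) :
    ‖fderivWithin ℝ f U y - fderivWithin ℝ f U x‖ ≤ C * ‖y - x‖ := by
  have hDf : DifferentiableOn ℝ (fderivWithin ℝ f U) U :=
    (hf.fderivWithin hU (by norm_num)).differentiableOn one_ne_zero
  refine hs.norm_image_sub_le_of_norm_hasFDerivWithin_le
    (fun z hz => (hDf z (hsU hz)).hasFDerivWithinAt.mono hsU) (fun z hz => ?_) hx hy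
  rw [← norm_iteratedFDerivWithin_one _ (hU z (hsU hz)),
    norm_iteratedFDerivWithin_fderivWithin hU (hsU hz)]
  exact hC z hz

theorem norm_sub_sub_fderivWithin_le_of_segment_subset (hU : UniqueDiffOn ℝ U)
    (hf : ContDiffOn ℝ 2 f U) {x y : E} (hxy : segment ℝ x y ⊆ U)
    (hC : ∀ z ∈ segment ℝ x y, ‖iteratedFDerivWithin ℝ 2 f U z‖ ≤ C) :
    ‖f y - f x - fderivWithin ℝ f U x (y - x)‖ ≤ C * ‖y - x‖ ^ 2 := by
  set D := fderivWithin ℝ f U x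
  have hC₀ : 0 ≤ C := (norm_nonneg _).trans (hC x (left_mem_segment ℝ x y))
  have hDf : DifferentiableOn ℝ f U := hf.differentiableOn (by norm_num)
  have hderiv : ∀ z ∈ segment ℝ x y, HasFDerivWithinAt (fun z => f z - D z)
      (fderivWithin ℝ f U z - D) (segment ℝ x y) z := fun z hz =>
    ((hDf z (hxy hz)).hasFDerivWithinAt.mono hxy).sub D.hasFDerivWithinAt
  have hbound : ∀ z ∈ segment ℝ x y, ‖fderivWithin ℝ f U z - D‖ ≤ C * ‖y - x‖ := fun z hz =>
    (norm_fderivWithin_sub_le_of_norm_iteratedFDerivWithin_two_le hU hf (convex_segment x y)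
      hxy hC (left_mem_segment ℝ x y) hz).trans
      (mul_le_mul_of_nonneg_left (norm_sub_le_of_mem_segment hz) hC₀)
  have := (convex_segment x y).norm_image_sub_le_of_norm_hasFDerivWithin_le hderiv hbound
    (left_mem_segment ℝ x y) (right_mem_segment ℝ x y)
  simpa [map_sub, sq, mul_assoc, sub_sub_sub_comm] using this

theorem norm_smul_sub_sub_fderivWithin_le (hU : UniqueDiffOn ℝ U) (hf : ContDiffOn ℝ 2 f U)
    {x e : E} {h : ℝ} (hh : h ≠ 0) (hseg : segment ℝ x (x + h • e) ⊆ U)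
    (hC : ∀ z ∈ segment ℝ x (x + h • e), ‖iteratedFDerivWithin ℝ 2 f U z‖ ≤ C) :
    ‖h⁻¹ • (f (x + h • e) - f x) - fderivWithin ℝ f U x e‖ ≤ C * ‖e‖ ^ 2 * |h| := by
  have hT := norm_sub_sub_fderivWithin_le_of_segment_subset hU hf hseg hC
  rw [add_sub_cancel_left, map_smul] at hT
  have hq : h⁻¹ • (f (x + h • e) - f x) - fderivWithin ℝ f U x e
      = h⁻¹ • (f (x + h • e) - f x - h • fderivWithin ℝ f U x e) := by
    rw [smul_sub _ (f (x + h • e) - f x), smul_smul, inv_mul_cancel₀ hh, one_smul]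
  rw [hq, norm_smul, norm_inv, Real.norm_eq_abs, inv_mul_le_iff₀ (abs_pos.mpr hh)]
  calc _ ≤ C * ‖h • e‖ ^ 2 := hT
    _ = |h| * (C * ‖e‖ ^ 2 * |h|) := by rw [norm_smul, Real.norm_eq_abs]; ring

end Taylor

theorem exists_norm_le_mul_of_forall_exists_norm_apply_le {𝕜 E ι : Type*} [RCLike 𝕜]
    [SeminormedAddCommGroup E] [NormedSpace 𝕜 E] (x : ι → E) {r : ι → ℝ} (hr : ∀ i, 0 < r i)
    (hx : ∀ ω : StrongDual 𝕜 E, ∃ C, ∀ i, ‖ω (x i)‖ ≤ C * r i) :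
    ∃ M, ∀ i, ‖x i‖ ≤ M * r i := by
  have hr' : ∀ i, ‖(r i : 𝕜)⁻¹‖ = (r i)⁻¹ := fun i => by
    rw [norm_inv, RCLike.norm_of_nonneg (hr i).le]
  obtain ⟨M, hM⟩ := banach_steinhaus
    (g := fun i => NormedSpace.inclusionInDoubleDualLi 𝕜 ((r i : 𝕜)⁻¹ • x i)) fun ω => by
      obtain ⟨C, hC⟩ := hx ω
      refine ⟨C, fun i => ?_⟩
      change ‖ω ((r i : 𝕜)⁻¹ • x i)‖ ≤ C
      rw [map_smul, norm_smul, hr', inv_mul_le_iff₀ (hr i), mul_comm]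
      exact hC i
  refine ⟨M, fun i => ?_⟩
  have := hM i
  rw [LinearIsometry.norm_map, norm_smul, hr', inv_mul_le_iff₀ (hr i), mul_comm] at this
  exact this

theorem exists_tendsto_nhdsNE_zero_of_norm_sub_le {E : Type*} [NormedAddCommGroup E]
    [CompleteSpace E] {v : ℝ → E} {M δ : ℝ} (hδ : 0 < δ)
    (hv : ∀ h k, h ≠ 0 → k ≠ 0 → |h| < δ → |k| < δ → ‖v h - v k‖ ≤ M * (|h| + |k|)) :
    ∃ L, Tendsto v (𝓝[≠] 0) (𝓝 L) := by
  rw [← cauchy_map_iff_exists_tendsto, cauchy_map_iff, tendsto_uniformity_iff_dist_tendsto_zero]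
  have hsmall : ∀ᶠ h in 𝓝[≠] (0 : ℝ), h ≠ 0 ∧ |h| < δ :=
    eventually_mem_nhdsWithin.and <| nhdsWithin_le_nhds <| by
      simpa only [Metric.ball, Real.dist_eq, sub_zero] using Metric.ball_mem_nhds (0 : ℝ) hδ
  have hid : Tendsto (fun h : ℝ => h) (𝓝[≠] 0) (𝓝 0) := nhdsWithin_le_nhds
  refine ⟨inferInstance, squeeze_zero' (Eventually.of_forall fun _ => dist_nonneg) ?_
    (by simpa using ((hid.comp tendsto_fst).abs.add (hid.comp tendsto_snd).abs).const_mul M)⟩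
  filter_upwards [hsmall.prod_mk hsmall] with p hp
  rw [dist_eq_norm]
  exact hv _ _ hp.1.1 hp.2.1 hp.1.2 hp.2.2

theorem stmt5_general {n : ℕ} {E : Type*} [NormedAddCommGroup E] [NormedSpace ℂ E]
    [CompleteSpace E]
    (U : Set (EuclideanSpace ℝ (Fin n))) (hU : IsOpen U)
    (F : EuclideanSpace ℝ (Fin n) → E)
    (hslice : ∀ ω : E →L[ℂ] ℂ,
      ContDiffOn ℝ 2 (fun x => ω (F x)) U ∧
      ∃ C : ℝ, ∀ x ∈ U, ‖iteratedFDerivWithin ℝ 2 (fun y => ω (F y)) U x‖ ≤ C)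
    (x₀ : EuclideanSpace ℝ (Fin n)) (hx₀ : x₀ ∈ U) (i : Fin n) :
    ∃ L : E, Filter.Tendsto
      (fun h : ℝ => h⁻¹ • (F (x₀ + h • EuclideanSpace.single i (1 : ℝ)) - F x₀))
      (nhdsWithin 0 {0}ᶜ) (nhds L) := by
  set e := EuclideanSpace.single i (1 : ℝ)
  set q : ℝ → E := fun h => h⁻¹ • (F (x₀ + h • e) - F x₀)
  obtain ⟨δ, hδ, hball⟩ := Metric.isOpen_iff.mp hU x₀ hx₀
  have hseg : ∀ h : ℝ, |h| < δ → segment ℝ x₀ (x₀ + h • e) ⊆ U := fun h hh =>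
    ((convex_ball x₀ δ).segment_subset (Metric.mem_ball_self hδ)
      (by simpa [e, norm_smul] using hh)).trans hball
  set ι := {p : ℝ × ℝ // p.1 ≠ 0 ∧ p.2 ≠ 0 ∧ |p.1| < δ ∧ |p.2| < δ}
  have hweak : ∀ ω : StrongDual ℂ E, ∃ C, ∀ p : ι,
      ‖ω (q p.1.1 - q p.1.2)‖ ≤ C * (|p.1.1| + |p.1.2|) := by
    intro ω
    obtain ⟨hωF, C, hC⟩ := hslice ω
    have hq : ∀ h : ℝ, h ≠ 0 → |h| < δ → ‖ω (q h) - fderivWithin ℝ (fun x => ω (F x)) U x₀ e‖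
        ≤ C * ‖e‖ ^ 2 * |h| := fun h hh hhδ => by
      simpa [q, map_sub] using norm_smul_sub_sub_fderivWithin_le hU.uniqueDiffOn hωF hh
        (hseg h hhδ) fun z hz => hC z (hseg h hhδ hz)
    refine ⟨C * ‖e‖ ^ 2, fun ⟨(h, k), hh, hk, hhδ, hkδ⟩ => ?_⟩
    rw [map_sub, ← sub_sub_sub_cancel_right _ _ (fderivWithin ℝ (fun x => ω (F x)) U x₀ e)]
    calc _ ≤ _ := norm_sub_le _ _
      _ ≤ _ := add_le_add (hq h hh hhδ) (hq k hk hkδ)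
      _ = _ := by ring
  obtain ⟨M, hM⟩ := exists_norm_le_mul_of_forall_exists_norm_apply_le _
    (fun p : ι => add_pos (abs_pos.mpr p.2.1) (abs_pos.mpr p.2.2.1)) hweak
  exact exists_tendsto_nhdsNE_zero_of_norm_sub_le hδ fun h k hh hk hhδ hkδ =>
    hM ⟨(h, k), hh, hk, hhδ, hkδ⟩

/-- core of Lemma 6.3: Let `U ⊆ ℝⁿ` be open with compact closure,
`E` a complex Banach space, `F : ℝⁿ → E` continuous on `U` such that for every
bounded linear functional `ω` on `E` the scalar function `ω ∘ F` is C² on `U`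
with second derivative bounded on `U`.  Then for every `x⁰ ∈ U` and coordinate
direction `i`, the difference quotients `(F(x⁰ + h eᵢ) − F(x⁰))/h` converge in
norm as `h → 0`, i.e. the partial derivative `∂F/∂xᵢ(x⁰)` exists in `E`. -/
theorem stmt5 {n : ℕ} {E : Type*} [NormedAddCommGroup E] [NormedSpace ℂ E]
    [CompleteSpace E]
    (U : Set (EuclideanSpace ℝ (Fin n))) (hU : IsOpen U)
    (hUcpt : IsCompact (closure U))
    (F : EuclideanSpace ℝ (Fin n) → E) (hFcont : ContinuousOn F U)
    (hslice : ∀ ω : E →L[ℂ] ℂ,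
      ContDiffOn ℝ 2 (fun x => ω (F x)) U ∧
      ∃ C : ℝ, ∀ x ∈ U, ‖iteratedFDerivWithin ℝ 2 (fun y => ω (F y)) U x‖ ≤ C)
    (x₀ : EuclideanSpace ℝ (Fin n)) (hx₀ : x₀ ∈ U) (i : Fin n) :
    ∃ L : E, Filter.Tendsto
      (fun h : ℝ => h⁻¹ • (F (x₀ + h • EuclideanSpace.single i (1 : ℝ)) - F x₀))
      (nhdsWithin 0 {0}ᶜ) (nhds L) :=
  stmt5_general U hU F hslice x₀ hx₀ i
end
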